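/- arXiv:2506.03361 — 2 statements merged into one kernel-verified Lean document; each statement's English description precedes it below -/
import Mathlib

section
/- Let t ≥ 2 and i ≥ 1 be integers and A a finite alphabet with |A| ≥ 2. The maximum cardinality of a code C ⊆ (A^{2t+1})ⁱ that is unambiguous for the Scenario-A.1 i-shot channel of the family-𝔠_t network ([t, t+1],[t, t]), taken over all choices of per-round node functions (f₁ʲ : Aᵗ → Aᵗ, f₂ʲ : A^{t+1} → Aᵗ for j = 1,…,i), equals |A|ⁱ. Equivalently, the i-shot capacity of 𝔠_t is 1, the same as its one-shot capacity, in both adversarial scenarios. -/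
/-!
Converse: if two codewords agree on the first coordinate in every round, the adversary makes
them indistinguishable by corrupting coordinates `1, …, t` of one and `t+1, …, 2t` of the other
(the same edges in every round), so an unambiguous code has at most `|A|^i` words.

Achievability: use a repetition code, let `V₁` forward its `t` symbols, and let `V₂` send the
constant word nearest to its `t+1` symbols together with the distance to it, capped at
`⌊(t+1)/2⌋`; for `t ≥ 2` this pair fits into `Aᵗ`. If two codewords with `aⱼ ≠ bⱼ` give the same
output in round `j`, every symbol seen by `V₁` is corrupted in one of the two transmissions, so
at most `t` corruptions are left for the `t+1` symbols of `V₂` in total. A common nearest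
constant differs from `aⱼ` or from `bⱼ`, which forces the two distances apart, and capping keeps
them apart because their sum is at most `t`.
-/

/-- A code `C` is unambiguous for the channel `Ω` if distinct codewords have
disjoint fan-out sets. -/
def Unambiguous {X Y : Type*} (Ω : X → Set Y) (C : Finset X) : Prop :=
  ∀ x ∈ C, ∀ y ∈ C, x ≠ y → Ω x ∩ Ω y = ∅

/-- The first `t` coordinates of a vector of length `2t+1` (the input of node
`V₁`). -/
def firstPartC (t : ℕ) {A : Type*} (v : Fin (2 * t + 1) → A) : Fin t → A :=
  fun m => v ⟨m.val, by have h := m.isLt; omega⟩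

/-- The last `t+1` coordinates of a vector of length `2t+1` (the input of node
`V₂`). -/
def lastPartC (t : ℕ) {A : Type*} (v : Fin (2 * t + 1) → A) : Fin (t + 1) → A :=
  fun m => v ⟨t + m.val, by have h := m.isLt; omega⟩

/-- The `i`-shot channel of the family-`𝔠_t` network `([t,t+1],[t,t])` in
Scenario A.1: the adversary picks a set `S` of at most `t` of the `2t+1` source
edges and may corrupt only those edges, the same ones in every round.
Per-round node functions are `f₁ʲ : Aᵗ → Aᵗ` and `f₂ʲ : A^{t+1} → Aᵗ`. -/
def famCA1Channel {A : Type*} (t i : ℕ)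
    (f₁ : Fin i → (Fin t → A) → (Fin t → A))
    (f₂ : Fin i → (Fin (t + 1) → A) → (Fin t → A))
    (x : Fin i → Fin (2 * t + 1) → A) :
    Set (Fin i → (Fin t → A) × (Fin t → A)) :=
  { z | ∃ S : Finset (Fin (2 * t + 1)), S.card ≤ t ∧
      ∃ y : Fin i → Fin (2 * t + 1) → A,
        (∀ j : Fin i, ∀ m, m ∉ S → y j m = x j m) ∧
        (∀ j : Fin i,
          z j = (f₁ j (firstPartC t (y j)), f₂ j (lastPartC t (y j)))) }

open Function

section Hamming

variable {ι A : Type*} [Fintype ι] [DecidableEq A]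

theorem card_le_hammingDist_const_add_hammingDist_const {a b : A} (hab : a ≠ b) (u : ι → A) :
    Fintype.card ι ≤ hammingDist u (const ι a) + hammingDist u (const ι b) := by
  have hconst : hammingDist (const ι a) (const ι b) = Fintype.card ι := by
    simp [hammingDist, hab]
  calc Fintype.card ι = hammingDist (const ι a) (const ι b) := hconst.symm
    _ ≤ _ := hammingDist_triangle_left _ _ _

theorem hammingDist_le_card_of_eqOn_compl {v x : ι → A} (S : Finset ι)
    (h : ∀ m ∉ S, v m = x m) : hammingDist v x ≤ S.card :=
  Finset.card_le_card fun m hm => by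
    by_contra hmS
    exact (Finset.mem_filter.mp hm).2 (h m hmS)

variable [Nonempty A]

noncomputable def nearestConst (u : ι → A) : A :=
  argmin fun c => hammingDist u (const ι c)

noncomputable def constRadius (u : ι → A) : ℕ :=
  hammingDist u (const ι (nearestConst u))

theorem constRadius_le (u : ι → A) (c : A) : constRadius u ≤ hammingDist u (const ι c) := by
  unfold constRadius nearestConst
  exact argmin_le (fun c : A => hammingDist u (const ι c)) c

noncomputable def constSignature (u : ι → A) : A × Fin (Fintype.card ι / 2 + 1) :=
  (nearestConst u, ⟨min (constRadius u) (Fintype.card ι / 2), by omega⟩)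

theorem constRadius_ne_of_nearestConst_eq {a b : A} (hab : a ≠ b) {u u' : ι → A}
    (hd : hammingDist u (const ι a) + hammingDist u' (const ι b) < Fintype.card ι)
    (hc : nearestConst u = nearestConst u') : constRadius u ≠ constRadius u' := by
  intro hr
  have ha := constRadius_le u a
  have hb := constRadius_le u' b
  by_cases hca : a = nearestConst u
  · have hcb : b ≠ nearestConst u' := hc ▸ hca ▸ hab.symm
    have := card_le_hammingDist_const_add_hammingDist_const hcb u'
    rw [← constRadius] at this
    omega
  · have := card_le_hammingDist_const_add_hammingDist_const hca u
    rw [← constRadius] at this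
    omega

theorem constSignature_ne {a b : A} (hab : a ≠ b) {u u' : ι → A}
    (hd : hammingDist u (const ι a) + hammingDist u' (const ι b) < Fintype.card ι) :
    constSignature u ≠ constSignature u' := by
  intro h
  simp only [constSignature, Prod.mk.injEq, Fin.mk.injEq] at h
  have hr := constRadius_ne_of_nearestConst_eq hab hd h.1
  have ha := constRadius_le u a
  have hb := constRadius_le u' b
  omega

end Hamming

theorem hammingDist_eq_firstPartC_add_lastPartC {A : Type*} [DecidableEq A] {t : ℕ}
    (v x : Fin (2 * t + 1) → A) :
    hammingDist v x = hammingDist (firstPartC t v) (firstPartC t x)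
      + hammingDist (lastPartC t v) (lastPartC t x) := by
  simp only [hammingDist, Finset.card_filter]
  rw [← Fin.sum_congr' _ (by omega : t + (t + 1) = 2 * t + 1), Fin.sum_univ_add]
  rfl

section Channel

variable {A : Type*} {t i : ℕ}

theorem famCA1Channel_inter_nonempty (f₁ : Fin i → (Fin t → A) → (Fin t → A))
    (f₂ : Fin i → (Fin (t + 1) → A) → (Fin t → A)) {x x' : Fin i → Fin (2 * t + 1) → A}
    {S S' : Finset (Fin (2 * t + 1))} (hS : S.card ≤ t) (hS' : S'.card ≤ t)
    (hagree : ∀ j m, m ∉ S → m ∉ S' → x j m = x' j m) :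
    (famCA1Channel t i f₁ f₂ x ∩ famCA1Channel t i f₁ f₂ x').Nonempty := by
  set y : Fin i → Fin (2 * t + 1) → A := fun j m => if m ∈ S then x' j m else x j m
  refine ⟨_, ⟨S, hS, y, fun j m hm => if_neg hm, fun j => rfl⟩,
    ⟨S', hS', y, fun j m hm => ?_, fun j => rfl⟩⟩
  by_cases hmS : m ∈ S
  · exact if_pos hmS
  · exact (if_neg hmS).trans (hagree j m hmS hm)

theorem card_le_of_unambiguous_famCA1Channel [Fintype A]
    {f₁ : Fin i → (Fin t → A) → (Fin t → A)} {f₂ : Fin i → (Fin (t + 1) → A) → (Fin t → A)}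
    {C : Finset (Fin i → Fin (2 * t + 1) → A)} (hC : Unambiguous (famCA1Channel t i f₁ f₂) C) :
    C.card ≤ Fintype.card A ^ i := by
  have hinj : Set.InjOn (fun x j => x j 0 : (Fin i → Fin (2 * t + 1) → A) → Fin i → A) C := by
    intro x hx x' hx' h0
    by_contra hne
    refine (famCA1Channel_inter_nonempty f₁ f₂ (S := Finset.Ioc 0 ⟨t, by omega⟩)
      (S' := Finset.Ioi ⟨t, by omega⟩) ?_ ?_ fun j m hm hm' => ?_).ne_empty (hC x hx x' hx' hne)
    · simp [Fin.card_Ioc]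
    · simp only [Fin.card_Ioi]; omega
    · obtain rfl : m = 0 := by
        simp only [Finset.mem_Ioc, Finset.mem_Ioi, Fin.lt_def, Fin.le_def, Fin.val_zero] at hm hm'
        ext; simp only [Fin.val_zero]; omega
      exact congrFun h0 j
  simpa [Fintype.card_fun] using Finset.card_le_card_of_injOn _ (fun x _ => Finset.mem_univ _) hinj

end Channel

section Repetition

variable (ι κ A : Type*) [Fintype ι] [DecidableEq ι] [Fintype A] [Nonempty κ]

noncomputable def repetitionCode : Finset (ι → κ → A) :=
  Finset.univ.map ⟨(const κ ∘ ·), (const_injective (α := κ) (β := A)).comp_left⟩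

theorem card_repetitionCode :
    (repetitionCode ι κ A).card = Fintype.card A ^ Fintype.card ι := by
  simp [repetitionCode]

end Repetition

theorem mul_half_succ_le_pow {q t : ℕ} (hq : 2 ≤ q) (ht : 2 ≤ t) :
    q * ((t + 1) / 2 + 1) ≤ q ^ t := by
  obtain ⟨s, rfl⟩ : ∃ s, t = s + 2 := ⟨t - 2, by omega⟩
  have h2 : s + 1 < 2 ^ (s + 1) := Nat.lt_two_pow_self
  calc q * ((s + 2 + 1) / 2 + 1) ≤ q * 2 ^ (s + 1) := by gcongr; omega
    _ ≤ q * q ^ (s + 1) := by gcongr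
    _ = q ^ (s + 2) := by ring

section Achievability

variable {A : Type*} [DecidableEq A] {t i : ℕ}

theorem hammingDist_lastPartC_add_le {a b : A} (hab : a ≠ b) {v w : Fin (2 * t + 1) → A}
    {S S' : Finset (Fin (2 * t + 1))} (hS : S.card ≤ t) (hS' : S'.card ≤ t)
    (hv : ∀ m ∉ S, v m = a) (hw : ∀ m ∉ S', w m = b) (hfirst : firstPartC t v = firstPartC t w) :
    hammingDist (lastPartC t v) (const _ a) + hammingDist (lastPartC t w) (const _ b) ≤ t := by
  have hva : hammingDist (firstPartC t v) (const _ a)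
      + hammingDist (lastPartC t v) (const _ a) ≤ S.card :=
    (hammingDist_eq_firstPartC_add_lastPartC v (const _ a)).symm.trans_le
      (hammingDist_le_card_of_eqOn_compl S hv)
  have hwb : hammingDist (firstPartC t w) (const _ b)
      + hammingDist (lastPartC t w) (const _ b) ≤ S'.card :=
    (hammingDist_eq_firstPartC_add_lastPartC w (const _ b)).symm.trans_le
      (hammingDist_le_card_of_eqOn_compl S' hw)
  have hfirst_errors : t ≤ hammingDist (firstPartC t v) (const _ a)
      + hammingDist (firstPartC t w) (const _ b) := by
    simpa [hfirst] using card_le_hammingDist_const_add_hammingDist_const hab (firstPartC t w)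
  omega

theorem unambiguous_repetitionCode [Fintype A] (g : (Fin (t + 1) → A) → Fin t → A)
    (hg : ∀ a b : A, a ≠ b → ∀ u u',
      hammingDist u (const _ a) + hammingDist u' (const _ b) ≤ t → g u ≠ g u') :
    Unambiguous (famCA1Channel t i (fun _ => id) (fun _ => g))
      (repetitionCode (Fin i) (Fin (2 * t + 1)) A) := by
  intro x hx x' hx' hne
  simp only [repetitionCode, Finset.mem_map, Finset.mem_univ, true_and,
    Function.Embedding.coeFn_mk] at hx hx'
  obtain ⟨a, rfl⟩ := hx
  obtain ⟨b, rfl⟩ := hx'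
  obtain ⟨j, hj⟩ : ∃ j, a j ≠ b j := Function.ne_iff.mp fun h => hne (h ▸ rfl)
  rw [Set.eq_empty_iff_forall_notMem]
  rintro z ⟨⟨S, hS, y, hy, hz⟩, ⟨S', hS', y', hy', hz'⟩⟩
  have hzj := (hz j).symm.trans (hz' j)
  simp only [Prod.mk.injEq, id] at hzj
  exact hg _ _ hj _ _ (hammingDist_lastPartC_add_le hj hS hS' (hy j) (hy' j) hzj.1) hzj.2

end Achievability

theorem famC_multishot_capacity_general
    (A : Type*) [Fintype A] [DecidableEq A] (hA : 2 ≤ Fintype.card A)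
    (t i : ℕ) (ht : 2 ≤ t) :
    IsGreatest { n : ℕ |
        ∃ (f₁ : Fin i → (Fin t → A) → (Fin t → A))
          (f₂ : Fin i → (Fin (t + 1) → A) → (Fin t → A))
          (C : Finset (Fin i → Fin (2 * t + 1) → A)),
          Unambiguous (famCA1Channel t i f₁ f₂) C ∧ C.card = n }
      (Fintype.card A ^ i) := by
  have : Nonempty A := Fintype.card_pos_iff.mp (by omega)
  refine ⟨?_, fun n ⟨f₁, f₂, C, hC, hn⟩ => hn ▸ card_le_of_unambiguous_famCA1Channel hC⟩
  obtain ⟨e⟩ : Nonempty (A × Fin (Fintype.card (Fin (t + 1)) / 2 + 1) ↪ (Fin t → A)) := by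
    apply Function.Embedding.nonempty_of_card_le
    simpa [Fintype.card_fun] using mul_half_succ_le_pow hA ht
  refine ⟨fun _ => id, fun _ => e ∘ constSignature, repetitionCode _ _ A,
    unambiguous_repetitionCode _ fun a b hab u u' hd h =>
      constSignature_ne hab ?_ (e.injective h), by simp [card_repetitionCode]⟩
  simpa using Nat.lt_succ_of_le hd

/-- Scenario A.1 multishot capacity of the family `𝔠_t = ([t,t+1],[t,t])`
(`t ≥ 2`): the maximum cardinality of an unambiguous code, over all choices of
per-round node functions, is `|A|^i`. -/
theorem famC_multishot_capacity
    (A : Type*) [Fintype A] [DecidableEq A] (hA : 2 ≤ Fintype.card A)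
    (t i : ℕ) (ht : 2 ≤ t) (hi : 1 ≤ i) :
    IsGreatest { n : ℕ |
        ∃ (f₁ : Fin i → (Fin t → A) → (Fin t → A))
          (f₂ : Fin i → (Fin (t + 1) → A) → (Fin t → A))
          (C : Finset (Fin i → Fin (2 * t + 1) → A)),
          Unambiguous (famCA1Channel t i f₁ f₂) C ∧ C.card = n }
      (Fintype.card A ^ i) :=
  famC_multishot_capacity_general A hA t i ht
end

section
/- (Channel-theoretic form of the Multishot Double Cut-Set Bound.) Let Ω : X → Set Z be a channel, and suppose there exist channels Ω₁ : X → Set Y₁, Ω' : Y₁ → Set Y₂ and Ω₂ : Y₂ → Set Z, all with nonempty fan-out sets, such that the concatenation is finer than Ω, i.e. (Ω₁ ▶ Ω' ▶ Ω₂)(x) ⊆ Ω(x) for all x ∈ X. Then every unambiguous code for Ω has cardinality at most the maximum cardinality of an unambiguous code for Ω'; equivalently, C₁(Ω) ≤ C₁(Ω'). -/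
/-- The maximum cardinality of an unambiguous code for the channel `Ω`. -/
noncomputable def maxUnambCard {X Y : Type*} (Ω : X → Set Y) : ℕ :=
  sSup { n : ℕ | ∃ C : Finset X, Unambiguous Ω C ∧ C.card = n }

/-- The concatenation `Ω₁ ▶ Ω₂` of two channels. -/
def concatChannel {X₁ X₂ Y₂ : Type*} (Ω₁ : X₁ → Set X₂) (Ω₂ : X₂ → Set Y₂) :
    X₁ → Set Y₂ :=
  fun x => ⋃ y ∈ Ω₁ x, Ω₂ y

/-! Concatenating a channel with another one, on either side, cannot enlarge its largest
unambiguous code. On the left: with `f x ∈ Ω₁ x` chosen, the fan-out sets of `Ω₂ ∘ f` lie inside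
those of `Ω₁ ▶ Ω₂`, so `f` maps an unambiguous code for `Ω₁ ▶ Ω₂` onto one for `Ω₂`, injectively
because fan-out sets are nonempty. On the right: a common output of `Ω₁ x` and `Ω₁ x'` yields,
through a nonempty fan-out set of `Ω₂`, a common output of `(Ω₁ ▶ Ω₂) x` and `(Ω₁ ▶ Ω₂) x'`.
Both apply to `Ω₁ ▶ (Ω' ▶ Ω₂)`, which is finer than `Ω`. -/

section

variable {X Y Z : Type*}

theorem Unambiguous.mono {Ω Ω' : X → Set Y} {C : Finset X} (hC : Unambiguous Ω C)
    (h : ∀ x, Ω' x ⊆ Ω x) : Unambiguous Ω' C := fun x hx y hy hxy =>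
  Set.subset_empty_iff.1 (hC x hx y hy hxy ▸ Set.inter_subset_inter (h x) (h y))

theorem subset_concatChannel {Ω₁ : X → Set Y} {Ω₂ : Y → Set Z} {x : X} {y : Y}
    (hy : y ∈ Ω₁ x) : Ω₂ y ⊆ concatChannel Ω₁ Ω₂ x :=
  Set.subset_biUnion_of_mem hy

theorem Unambiguous.comp_of_concatChannel {Ω₁ : X → Set Y} {Ω₂ : Y → Set Z} {C : Finset X}
    (hC : Unambiguous (concatChannel Ω₁ Ω₂) C) {f : X → Y} (hf : ∀ x, f x ∈ Ω₁ x) :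
    Unambiguous (Ω₂ ∘ f) C :=
  hC.mono fun x => subset_concatChannel (hf x)

theorem Unambiguous.of_concatChannel {Ω₁ : X → Set Y} {Ω₂ : Y → Set Z} {C : Finset X}
    (h₂ : ∀ y, (Ω₂ y).Nonempty) (hC : Unambiguous (concatChannel Ω₁ Ω₂) C) :
    Unambiguous Ω₁ C := by
  intro x hx x' hx' hxx'
  rw [Set.eq_empty_iff_forall_notMem]
  rintro y ⟨hy, hy'⟩
  obtain ⟨z, hz⟩ := h₂ y
  exact (hC x hx x' hx' hxx').subset ⟨subset_concatChannel hy hz, subset_concatChannel hy' hz⟩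

theorem Unambiguous.injOn_of_comp {Ω : Y → Set Z} {f : X → Y} {C : Finset X}
    (hne : ∀ y, (Ω y).Nonempty) (hC : Unambiguous (Ω ∘ f) C) : Set.InjOn f C := by
  intro x hx x' hx' hxx'
  by_contra hne'
  obtain ⟨z, hz⟩ := hne (f x)
  exact (hC x hx x' hx' hne').subset ⟨hz, show z ∈ Ω (f x') from hxx' ▸ hz⟩

theorem Unambiguous.image_of_comp [DecidableEq Y] {Ω : Y → Set Z} {f : X → Y} {C : Finset X}
    (hC : Unambiguous (Ω ∘ f) C) : Unambiguous Ω (C.image f) := by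
  simp only [Unambiguous, Finset.mem_image]
  rintro _ ⟨x, hx, rfl⟩ _ ⟨x', hx', rfl⟩ hxx'
  exact hC x hx x' hx' (ne_of_apply_ne f hxx')

theorem concatChannel_nonempty {Ω₁ : X → Set Y} {Ω₂ : Y → Set Z}
    (h₁ : ∀ x, (Ω₁ x).Nonempty) (h₂ : ∀ y, (Ω₂ y).Nonempty) (x : X) :
    (concatChannel Ω₁ Ω₂ x).Nonempty :=
  (h₂ _).mono (subset_concatChannel (h₁ x).some_mem)

theorem card_le_maxUnambCard [Fintype X] {Ω : X → Set Y} {C : Finset X}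
    (hC : Unambiguous Ω C) : C.card ≤ maxUnambCard Ω := by
  refine le_csSup ⟨Fintype.card X, ?_⟩ ⟨C, hC, rfl⟩
  rintro _ ⟨D, -, rfl⟩
  exact D.card_le_univ

theorem maxUnambCard_le {Ω : X → Set Y} {n : ℕ}
    (h : ∀ C : Finset X, Unambiguous Ω C → C.card ≤ n) : maxUnambCard Ω ≤ n := by
  refine csSup_le ⟨0, ∅, ?_, rfl⟩ ?_
  · simp [Unambiguous]
  · rintro _ ⟨C, hC, rfl⟩
    exact h C hC

theorem Unambiguous.card_le_of_concatChannel [Fintype Y] {Ω₁ : X → Set Y} {Ω₂ : Y → Set Z}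
    {C : Finset X} (h₁ : ∀ x, (Ω₁ x).Nonempty) (h₂ : ∀ y, (Ω₂ y).Nonempty)
    (hC : Unambiguous (concatChannel Ω₁ Ω₂) C) : C.card ≤ maxUnambCard Ω₂ := by
  classical
  choose f hf using h₁
  have hCf : Unambiguous (Ω₂ ∘ f) C := hC.comp_of_concatChannel hf
  calc C.card = (C.image f).card := (Finset.card_image_of_injOn (hCf.injOn_of_comp h₂)).symm
    _ ≤ maxUnambCard Ω₂ := card_le_maxUnambCard hCf.image_of_comp

theorem maxUnambCard_concatChannel_le [Fintype X] {Ω₁ : X → Set Y} {Ω₂ : Y → Set Z}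
    (h₂ : ∀ y, (Ω₂ y).Nonempty) : maxUnambCard (concatChannel Ω₁ Ω₂) ≤ maxUnambCard Ω₁ :=
  maxUnambCard_le fun _ hC => card_le_maxUnambCard (hC.of_concatChannel h₂)

end

theorem multishot_double_cut_set_bound_general {X Y₁ Y₂ Z : Type*}
    [Fintype Y₁]
    (Ω : X → Set Z) (Ω₁ : X → Set Y₁) (Ω' : Y₁ → Set Y₂) (Ω₂ : Y₂ → Set Z)
    (h₁ : ∀ x, (Ω₁ x).Nonempty)
    (h' : ∀ y, (Ω' y).Nonempty) (h₂ : ∀ y, (Ω₂ y).Nonempty)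
    (h : ∀ x, concatChannel Ω₁ (concatChannel Ω' Ω₂) x ⊆ Ω x) :
    (∀ C : Finset X, Unambiguous Ω C → C.card ≤ maxUnambCard Ω') ∧
    maxUnambCard Ω ≤ maxUnambCard Ω' := by
  have hcode : ∀ C : Finset X, Unambiguous Ω C → C.card ≤ maxUnambCard Ω' := fun C hC =>
    ((hC.mono h).card_le_of_concatChannel h₁ (concatChannel_nonempty h' h₂)).trans
      (maxUnambCard_concatChannel_le h₂)
  exact ⟨hcode, maxUnambCard_le hcode⟩

/-- Channel-theoretic Multishot Double Cut-Set Bound: if `Ω₁ ▶ Ω' ▶ Ω₂` is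
finer than `Ω` (all channels having nonempty fan-out sets), then every
unambiguous code for `Ω` has cardinality at most the maximum cardinality of an
unambiguous code for `Ω'`; equivalently `C₁(Ω) ≤ C₁(Ω')`. -/
theorem multishot_double_cut_set_bound {X Y₁ Y₂ Z : Type*}
    [Fintype X] [Fintype Y₁]
    (Ω : X → Set Z) (Ω₁ : X → Set Y₁) (Ω' : Y₁ → Set Y₂) (Ω₂ : Y₂ → Set Z)
    (hΩ : ∀ x, (Ω x).Nonempty) (h₁ : ∀ x, (Ω₁ x).Nonempty)
    (h' : ∀ y, (Ω' y).Nonempty) (h₂ : ∀ y, (Ω₂ y).Nonempty)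
    (h : ∀ x, concatChannel Ω₁ (concatChannel Ω' Ω₂) x ⊆ Ω x) :
    (∀ C : Finset X, Unambiguous Ω C → C.card ≤ maxUnambCard Ω') ∧
    maxUnambCard Ω ≤ maxUnambCard Ω' :=
  multishot_double_cut_set_bound_general Ω Ω₁ Ω' Ω₂ h₁ h' h₂ h
end
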